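/- Let $a, b \geq 0$, $0 \leq \alpha < 1$, $\beta > 0$, $0 < T < \infty$, and let $u : [0,T] \to [0,\infty)$ be an integrable function satisfying $u(t) \leq a(T-t)^{-\alpha} + b \int_t^T (s-t)^{\beta-1} u(s)\,ds$ for almost every $t \in [0,T)$. Then there exists a constant $M$ depending only on $b$, $\alpha$, $\beta$, and $T$ such that $u(t) \leq a M (T-t)^{-\alpha}$ for almost every $t \in [0,T)$. -/

import Mathlib

/-!
Write the hypothesis as `u ≤ a w + b I^β u`, where `w t = (T - t)^(-α)` and `I^γ` is the right
Riemann–Liouville integral with kernel `(s - t)^(γ - 1)`. Splitting `(t, r)` at its midpoint, on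
each half of which one of the two kernels is comparable to a constant, gives the Beta-type bounds
`I^γ I^β ≤ B I^(γ + β)` and `I^γ w ≤ B' T^γ w`, so substituting the inequality into itself `k` times
yields `u ≤ c a w + d I^((k + 1) β) u`. Once `(k + 1) β ≥ 1` the kernel is bounded by
`T^((k + 1) β - 1)`, and `u ≤ c a w + C ∫_t^T u`. Integrating this once over `(t, T)` gives a
classical Gronwall inequality for the continuous function `∫_t^T u`, whence `u ≤ a M w`. The
iteration is carried out with `ℝ≥0∞`-valued integrals, so that no integrability of `u` against
the singular kernels is ever needed.
-/

open MeasureTheory Set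
open scoped ENNReal NNReal

section RpowKernel

variable {p q t r : ℝ}

theorem intervalIntegrable_sub_rpow (hp : 0 < p) :
    IntervalIntegrable (fun s => (s - t) ^ (p - 1)) volume t r := by
  simpa using (intervalIntegral.intervalIntegrable_rpow' (a := 0) (b := r - t) (r := p - 1)
    (by linarith)).comp_sub_right t

theorem intervalIntegrable_rsub_rpow (hq : 0 < q) :
    IntervalIntegrable (fun s => (r - s) ^ (q - 1)) volume t r := by
  simpa using ((intervalIntegral.intervalIntegrable_rpow' (a := 0) (b := r - t) (r := q - 1)
    (by linarith)).comp_sub_left r).symm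

theorem integral_sub_rpow (hp : 0 < p) : ∫ s in t..r, (s - t) ^ (p - 1) = (r - t) ^ p / p := by
  rw [intervalIntegral.integral_comp_sub_right (· ^ (p - 1)), sub_self,
    integral_rpow (.inl (by linarith)), sub_add_cancel, Real.zero_rpow hp.ne', sub_zero]

theorem integral_rsub_rpow (hq : 0 < q) : ∫ s in t..r, (r - s) ^ (q - 1) = (r - t) ^ q / q := by
  rw [intervalIntegral.integral_comp_sub_left (· ^ (q - 1)), sub_self,
    integral_rpow (.inl (by linarith)), sub_add_cancel, Real.zero_rpow hq.ne', sub_zero]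

theorem lintegral_Ioo_eq_ofReal_integral {f : ℝ → ℝ} (htr : t ≤ r)
    (hf : IntervalIntegrable f volume t r) (hf0 : ∀ᵐ s ∂volume.restrict (Ioo t r), 0 ≤ f s) :
    ∫⁻ s in Ioo t r, ENNReal.ofReal (f s) = ENNReal.ofReal (∫ s in t..r, f s) := by
  rw [intervalIntegral.integral_of_le htr, integral_Ioc_eq_integral_Ioo,
    ofReal_integral_eq_lintegral_ofReal]
  · exact ((intervalIntegrable_iff_integrableOn_Ioc_of_le htr).mp hf).mono_set Ioo_subset_Ioc_self
  · exact hf0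

theorem lintegral_Ioo_sub_rpow (hp : 0 < p) (htr : t ≤ r) :
    ∫⁻ s in Ioo t r, ENNReal.ofReal ((s - t) ^ (p - 1)) = ENNReal.ofReal ((r - t) ^ p / p) := by
  rw [lintegral_Ioo_eq_ofReal_integral htr (intervalIntegrable_sub_rpow hp)
    (ae_restrict_of_forall_mem measurableSet_Ioo fun s hs =>
      Real.rpow_nonneg (sub_nonneg.2 hs.1.le) _),
    integral_sub_rpow hp]

theorem lintegral_Ioo_rsub_rpow (hq : 0 < q) (htr : t ≤ r) :
    ∫⁻ s in Ioo t r, ENNReal.ofReal ((r - s) ^ (q - 1)) = ENNReal.ofReal ((r - t) ^ q / q) := by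
  rw [lintegral_Ioo_eq_ofReal_integral htr (intervalIntegrable_rsub_rpow hq)
    (ae_restrict_of_forall_mem measurableSet_Ioo fun s hs =>
      Real.rpow_nonneg (sub_nonneg.2 hs.2.le) _),
    integral_rsub_rpow hq]

end RpowKernel

theorem rpow_sub_one_le_max_mul_of_half_le {q x y : ℝ} (hx : 0 < x) (hxy : x / 2 ≤ y)
    (hyx : y ≤ x) : y ^ (q - 1) ≤ max 1 (2 ^ (1 - q)) * x ^ (q - 1) := by
  rcases le_or_gt 1 q with hq | hq
  · calc y ^ (q - 1) ≤ x ^ (q - 1) := Real.rpow_le_rpow (by linarith) hyx (by linarith)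
      _ ≤ max 1 (2 ^ (1 - q)) * x ^ (q - 1) :=
        le_mul_of_one_le_left (by positivity) (le_max_left _ _)
  · calc y ^ (q - 1) ≤ (x / 2) ^ (q - 1) :=
          Real.rpow_le_rpow_of_nonpos (by positivity) hxy (by linarith)
      _ = 2 ^ (1 - q) * x ^ (q - 1) := by
        rw [Real.div_rpow hx.le zero_le_two, div_eq_mul_inv, mul_comm, ← Real.rpow_neg zero_le_two,
          neg_sub]
      _ ≤ max 1 (2 ^ (1 - q)) * x ^ (q - 1) := by gcongr; exact le_max_right _ _

noncomputable def betaBound (p q : ℝ) : ℝ := max 1 (2 ^ (1 - q)) / p + max 1 (2 ^ (1 - p)) / q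

theorem betaBound_pos {p q : ℝ} (hp : 0 < p) (hq : 0 < q) : 0 < betaBound p q := by
  unfold betaBound; positivity

/-- Split at the midpoint: on each half one of the two factors is at most `max 1 (2 ^ (1 - ·))`
times its value at distance `r - t`, and the other one integrates exactly. -/
theorem lintegral_Ioo_rpow_mul_rpow_le {p q t r : ℝ} (hp : 0 < p) (hq : 0 < q) (htr : t < r) :
    ∫⁻ s in Ioo t r, ENNReal.ofReal ((s - t) ^ (p - 1)) * ENNReal.ofReal ((r - s) ^ (q - 1)) ≤
      ENNReal.ofReal (betaBound p q * (r - t) ^ (p + q - 1)) := by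
  set m := (t + r) / 2 with hm
  have hrt : 0 < r - t := sub_pos.2 htr
  have h_left : ∫⁻ s in Ioc t m,
      ENNReal.ofReal ((s - t) ^ (p - 1)) * ENNReal.ofReal ((r - s) ^ (q - 1)) ≤
      ∫⁻ s in Ioo t r, ENNReal.ofReal ((s - t) ^ (p - 1)) *
        ENNReal.ofReal (max 1 (2 ^ (1 - q)) * (r - t) ^ (q - 1)) :=
    (setLIntegral_mono' measurableSet_Ioc fun s hs => by
      gcongr
      exact rpow_sub_one_le_max_mul_of_half_le hrt (by linarith [hs.2, hm])
        (by linarith [hs.1, hm])).trans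
    (lintegral_mono_set fun s hs => ⟨hs.1, by linarith [hs.2, hm]⟩)
  have h_right : ∫⁻ s in Ioo m r,
      ENNReal.ofReal ((s - t) ^ (p - 1)) * ENNReal.ofReal ((r - s) ^ (q - 1)) ≤
      ∫⁻ s in Ioo t r, ENNReal.ofReal (max 1 (2 ^ (1 - p)) * (r - t) ^ (p - 1)) *
        ENNReal.ofReal ((r - s) ^ (q - 1)) :=
    (setLIntegral_mono' measurableSet_Ioo fun s hs => by
      gcongr
      exact rpow_sub_one_le_max_mul_of_half_le hrt (by linarith [hs.1, hm])
        (by linarith [hs.2, hm])).trans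
    (lintegral_mono_set fun s hs => ⟨by linarith [hs.1, hm], hs.2⟩)
  calc _ ≤ ∫⁻ s in Ioc t m ∪ Ioo m r,
        ENNReal.ofReal ((s - t) ^ (p - 1)) * ENNReal.ofReal ((r - s) ^ (q - 1)) :=
        lintegral_mono_set fun s hs => (le_or_gt s m).imp (fun h => ⟨hs.1, h⟩) (fun h => ⟨h, hs.2⟩)
    _ ≤ _ := (lintegral_union_le _ _ _).trans (add_le_add h_left h_right)
    _ = _ := by
        rw [lintegral_mul_const' _ _ ENNReal.ofReal_ne_top, lintegral_Ioo_sub_rpow hp htr.le,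
          lintegral_const_mul' _ _ ENNReal.ofReal_ne_top, lintegral_Ioo_rsub_rpow hq htr.le,
          ← ENNReal.ofReal_mul (by positivity), ← ENNReal.ofReal_mul (by positivity),
          ← ENNReal.ofReal_add (by positivity) (by positivity), Real.rpow_sub_one hrt.ne',
          Real.rpow_sub_one hrt.ne', Real.rpow_sub_one hrt.ne', Real.rpow_add hrt, betaBound]
        congr 1
        field_simp

theorem lintegral_Ioo_lintegral_Ioo_comm {t T : ℝ} {f : ℝ → ℝ → ℝ≥0∞}
    (hf : Measurable (Function.uncurry f)) :
    ∫⁻ s in Ioo t T, ∫⁻ r in Ioo s T, f s r = ∫⁻ r in Ioo t T, ∫⁻ s in Ioo t r, f s r := by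
  set g : ℝ → ℝ → ℝ≥0∞ := fun s r => {x : ℝ × ℝ | x.1 < x.2}.indicator (Function.uncurry f) (s, r)
  have hg : Measurable (Function.uncurry g) :=
    hf.indicator (measurableSet_lt measurable_fst measurable_snd)
  have h_left : EqOn (fun s => ∫⁻ r in Ioo s T, f s r) (fun s => ∫⁻ r in Ioo t T, g s r)
      (Ioo t T) := fun s hs => by
    have : g s = (Ioi s).indicator (f s) := funext fun r => by
      by_cases h : s < r <;> simp [g, h]
    beta_reduce
    rw [this, setLIntegral_indicator measurableSet_Ioi, Ioi_inter_Ioo, max_eq_left hs.1.le]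
  have h_right : EqOn (fun r => ∫⁻ s in Ioo t r, f s r) (fun r => ∫⁻ s in Ioo t T, g s r)
      (Ioo t T) := fun r hr => by
    have : (g · r) = (Iio r).indicator (f · r) := funext fun s => by
      by_cases h : s < r <;> simp [g, h]
    beta_reduce
    rw [this, setLIntegral_indicator measurableSet_Iio, Iio_inter_Ioo, min_eq_left hr.2.le]
  rw [setLIntegral_congr_fun measurableSet_Ioo h_left,
    setLIntegral_congr_fun measurableSet_Ioo h_right]
  exact lintegral_lintegral_swap hg.aemeasurable

/-- The right-sided Riemann–Liouville integral of order `γ` on `(t, T)`, without the factor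
`1 / Γ(γ)`. -/
noncomputable def rlIntegral (T γ : ℝ) (U : ℝ → ℝ≥0∞) (t : ℝ) : ℝ≥0∞ :=
  ∫⁻ s in Ioo t T, ENNReal.ofReal ((s - t) ^ (γ - 1)) * U s

section rlIntegral

variable {T α β γ t : ℝ} {U V : ℝ → ℝ≥0∞}

theorem rlIntegral_mono_ae (h : ∀ᵐ s ∂volume.restrict (Ioo t T), U s ≤ V s) :
    rlIntegral T γ U t ≤ rlIntegral T γ V t :=
  lintegral_mono_ae (h.mono fun _ hs => by gcongr)

theorem rlIntegral_add_mul (hU : Measurable U) (A : ℝ≥0∞) (B : ℝ≥0) :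
    rlIntegral T γ (fun s => A * U s + B * V s) t =
      A * rlIntegral T γ U t + B * rlIntegral T γ V t := by
  simp only [rlIntegral, mul_add, mul_left_comm _ A, mul_left_comm _ (B : ℝ≥0∞)]
  have hm : Measurable fun s => A * (ENNReal.ofReal ((s - t) ^ (γ - 1)) * U s) := by fun_prop
  rw [lintegral_add_left hm, lintegral_const_mul _ (by fun_prop),
    lintegral_const_mul' _ _ ENNReal.coe_ne_top]

theorem rlIntegral_rlIntegral_le (hγ : 0 < γ) (hβ : 0 < β) (hU : Measurable U) :
    rlIntegral T γ (rlIntegral T β U) t ≤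
      ENNReal.ofReal (betaBound γ β) * rlIntegral T (γ + β) U t :=
  calc rlIntegral T γ (rlIntegral T β U) t
      = ∫⁻ s in Ioo t T, ∫⁻ r in Ioo s T, ENNReal.ofReal ((s - t) ^ (γ - 1)) *
          (ENNReal.ofReal ((r - s) ^ (β - 1)) * U r) := by
        simp only [rlIntegral, lintegral_const_mul' _ _ ENNReal.ofReal_ne_top]
    _ = ∫⁻ r in Ioo t T, (∫⁻ s in Ioo t r, ENNReal.ofReal ((s - t) ^ (γ - 1)) *
          ENNReal.ofReal ((r - s) ^ (β - 1))) * U r := by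
        rw [lintegral_Ioo_lintegral_Ioo_comm (by fun_prop)]
        simp only [← mul_assoc]
        refine lintegral_congr fun r => ?_
        rw [lintegral_mul_const]
        fun_prop
    _ ≤ ∫⁻ r in Ioo t T, ENNReal.ofReal (betaBound γ β * (r - t) ^ (γ + β - 1)) * U r :=
        setLIntegral_mono' measurableSet_Ioo fun r hr => by
          gcongr; exact lintegral_Ioo_rpow_mul_rpow_le hγ hβ hr.1
    _ = ENNReal.ofReal (betaBound γ β) * rlIntegral T (γ + β) U t := by
        simp only [rlIntegral, ← lintegral_const_mul' _ _ ENNReal.ofReal_ne_top, ← mul_assoc,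
          ENNReal.ofReal_mul (betaBound_pos hγ hβ).le]

theorem rlIntegral_rsub_rpow_neg_le (hγ : 0 < γ) (hα : α < 1) (ht : 0 ≤ t) (htT : t < T) :
    rlIntegral T γ (fun s => ENNReal.ofReal ((T - s) ^ (-α))) t ≤
      ENNReal.ofReal (betaBound γ (1 - α) * T ^ γ) * ENNReal.ofReal ((T - t) ^ (-α)) :=
  calc rlIntegral T γ (fun s => ENNReal.ofReal ((T - s) ^ (-α))) t
      = ∫⁻ s in Ioo t T, ENNReal.ofReal ((s - t) ^ (γ - 1)) *
          ENNReal.ofReal ((T - s) ^ ((1 - α) - 1)) := by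
        rw [sub_sub_cancel_left]; rfl
    _ ≤ ENNReal.ofReal (betaBound γ (1 - α) * (T - t) ^ (γ + (1 - α) - 1)) :=
        lintegral_Ioo_rpow_mul_rpow_le hγ (by linarith) htT
    _ ≤ _ := by
        have hB := (betaBound_pos hγ (sub_pos.2 hα)).le
        rw [← ENNReal.ofReal_mul (mul_nonneg hB (Real.rpow_nonneg (by linarith) _)), mul_assoc,
          show γ + (1 - α) - 1 = γ + -α by ring, Real.rpow_add (sub_pos.2 htT)]
        gcongr
        linarith

theorem rlIntegral_le_mul_lintegral (hγ : 1 ≤ γ) (ht : 0 ≤ t) :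
    rlIntegral T γ U t ≤ ENNReal.ofReal (T ^ (γ - 1)) * ∫⁻ s in Ioo t T, U s := by
  rw [rlIntegral, ← lintegral_const_mul' _ _ ENNReal.ofReal_ne_top]
  refine setLIntegral_mono' measurableSet_Ioo fun s hs => ?_
  gcongr <;> linarith [hs.1, hs.2]

end rlIntegral

section Iteration

variable {T α β : ℝ}

theorem ae_le_add_rlIntegral_add_order {γ : ℝ} {A : ℝ≥0∞} {B c d : ℝ≥0} {U : ℝ → ℝ≥0∞}
    (hγ : 0 < γ) (hα : α < 1) (hβ : 0 < β) (hU : Measurable U)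
    (h : ∀ᵐ t ∂volume.restrict (Ico 0 T),
      U t ≤ A * ENNReal.ofReal ((T - t) ^ (-α)) + B * rlIntegral T β U t)
    (hγU : ∀ᵐ t ∂volume.restrict (Ico 0 T),
      U t ≤ c * A * ENNReal.ofReal ((T - t) ^ (-α)) + d * rlIntegral T γ U t) :
    ∀ᵐ t ∂volume.restrict (Ico 0 T),
      U t ≤ ((c + d * (betaBound γ (1 - α) * T ^ γ).toNNReal : ℝ≥0) : ℝ≥0∞) * A *
          ENNReal.ofReal ((T - t) ^ (-α)) +
        ((d * B * (betaBound γ β).toNNReal : ℝ≥0) : ℝ≥0∞) * rlIntegral T (γ + β) U t := by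
  filter_upwards [hγU, self_mem_ae_restrict measurableSet_Ico] with t ht htT
  have h' : ∀ᵐ s ∂volume.restrict (Ioo t T),
      U s ≤ A * ENNReal.ofReal ((T - s) ^ (-α)) + B * rlIntegral T β U s :=
    ae_restrict_of_ae_restrict_of_subset (Ioo_subset_Ico_self.trans (Ico_subset_Ico_left htT.1)) h
  calc U t ≤ c * A * ENNReal.ofReal ((T - t) ^ (-α)) + d * rlIntegral T γ U t := ht
    _ ≤ c * A * ENNReal.ofReal ((T - t) ^ (-α)) +
        d * (A * (ENNReal.ofReal (betaBound γ (1 - α) * T ^ γ) * ENNReal.ofReal ((T - t) ^ (-α))) +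
          B * (ENNReal.ofReal (betaBound γ β) * rlIntegral T (γ + β) U t)) := by
        gcongr
        refine (rlIntegral_mono_ae h').trans ?_
        rw [rlIntegral_add_mul (by fun_prop)]
        gcongr
        · exact rlIntegral_rsub_rpow_neg_le hγ hα htT.1 htT.2
        · exact rlIntegral_rlIntegral_le hγ hβ hU
    _ = _ := by
        simp only [ENNReal.ofReal, ENNReal.coe_add, ENNReal.coe_mul]
        ring

theorem exists_ae_le_add_rlIntegral_succ_mul (hα : α < 1) (hβ : 0 < β) (B : ℝ≥0) (k : ℕ) :
    ∃ c d : ℝ≥0, 1 ≤ c ∧ ∀ (A : ℝ≥0∞) (U : ℝ → ℝ≥0∞), Measurable U →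
      (∀ᵐ t ∂volume.restrict (Ico 0 T),
        U t ≤ A * ENNReal.ofReal ((T - t) ^ (-α)) + B * rlIntegral T β U t) →
      ∀ᵐ t ∂volume.restrict (Ico 0 T),
        U t ≤ c * A * ENNReal.ofReal ((T - t) ^ (-α)) + d * rlIntegral T ((k + 1) * β) U t := by
  induction k with
  | zero => exact ⟨1, B, le_rfl, fun A U _ h => by simpa using h⟩
  | succ k ih =>
    obtain ⟨c, d, hc, hcd⟩ := ih
    refine ⟨c + d * (betaBound ((k + 1) * β) (1 - α) * T ^ ((k + 1) * β)).toNNReal,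
      d * B * (betaBound ((k + 1) * β) β).toNNReal, le_add_right hc, fun A U hU h => ?_⟩
    rw [show ((k + 1 : ℕ) + 1 : ℝ) * β = (k + 1) * β + β by push_cast; ring]
    exact ae_le_add_rlIntegral_add_order (by positivity) hα hβ hU h (hcd A U hU h)

theorem exists_one_le_order_ae_le_add_rlIntegral (hα : α < 1) (hβ : 0 < β) (B : ℝ≥0) :
    ∃ γ, 1 ≤ γ ∧ ∃ c d : ℝ≥0, 1 ≤ c ∧ ∀ (A : ℝ≥0∞) (U : ℝ → ℝ≥0∞), Measurable U →
      (∀ᵐ t ∂volume.restrict (Ico 0 T),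
        U t ≤ A * ENNReal.ofReal ((T - t) ^ (-α)) + B * rlIntegral T β U t) →
      ∀ᵐ t ∂volume.restrict (Ico 0 T),
        U t ≤ c * A * ENNReal.ofReal ((T - t) ^ (-α)) + d * rlIntegral T γ U t := by
  obtain ⟨k, hk⟩ := exists_nat_ge β⁻¹
  refine ⟨(k + 1) * β, ?_, exists_ae_le_add_rlIntegral_succ_mul hα hβ B k⟩
  rw [inv_le_iff_one_le_mul₀ hβ] at hk
  nlinarith

end Iteration

section Gronwall

variable {C G T : ℝ}

theorem le_mul_exp_of_le_add_mul_integral {v : ℝ → ℝ} {a : ℝ} (hv : Continuous v) (hC : 0 ≤ C)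
    (h : ∀ t ∈ Icc a T, v t ≤ G + C * ∫ s in t..T, v s) :
    ∀ t ∈ Icc a T, v t ≤ G * Real.exp (C * (T - t)) := by
  -- Classical Gronwall for `f τ = G + C ∫_{T-τ}^T v`, whose derivative is `C v (T - τ) ≤ C f τ`.
  set f : ℝ → ℝ := fun τ => G + C * ∫ s in (T - τ)..T, v s
  have hf : ∀ τ, HasDerivAt f (C * v (T - τ)) τ := fun τ => by
    have hI := (intervalIntegral.integral_hasDerivAt_left (hv.intervalIntegrable _ T)
      (hv.stronglyMeasurableAtFilter _ _) hv.continuousAt).comp τ ((hasDerivAt_id τ).const_sub T)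
    simpa only [Function.comp_def, id, mul_neg, neg_neg, mul_one] using
      (hI.const_mul C).const_add G
  have hf_le := le_gronwallBound_of_liminf_deriv_right_le (δ := G) (ε := 0) (a := 0) (b := T - a)
    (continuous_iff_continuousAt.2 fun τ => (hf τ).continuousAt).continuousOn
    (fun τ _ r hr => (hf τ).hasDerivWithinAt.liminf_right_slope_le hr) (by simp [f])
    (fun τ hτ => by
      rw [add_zero]
      exact mul_le_mul_of_nonneg_left (h (T - τ) ⟨by linarith [hτ.2], by linarith [hτ.1]⟩) hC)
  intro t ht
  calc v t ≤ f (T - t) := by simpa [f] using h t ht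
    _ ≤ G * Real.exp (C * (T - t)) := by
        simpa [gronwallBound_ε0] using hf_le (T - t) ⟨by linarith [ht.2], by linarith [ht.1]⟩

theorem ae_le_of_le_add_mul_integral {w g : ℝ → ℝ} (hC : 0 ≤ C) (hw : Integrable w)
    (hg : IntegrableOn g (Icc 0 T)) (hG : ∀ t ∈ Icc 0 T, ∫ s in t..T, g s ≤ G)
    (h : ∀ᵐ t ∂volume.restrict (Ico 0 T), w t ≤ g t + C * ∫ s in t..T, w s) :
    ∀ᵐ t ∂volume.restrict (Ico 0 T), w t ≤ g t + C * G * Real.exp (C * T) := by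
  set v : ℝ → ℝ := fun t => ∫ s in t..T, w s
  have hv : Continuous v := by
    rw [show v = fun t => -∫ s in T..t, w s from funext fun t => intervalIntegral.integral_symm _ _]
    exact (intervalIntegral.continuous_primitive (fun _ _ => hw.intervalIntegrable) T).neg
  have h' : ∀ᵐ t ∂volume.restrict (Icc 0 T), w t ≤ g t + C * v t := by
    rwa [← Measure.restrict_congr_set Ico_ae_eq_Icc]
  have hv_le : ∀ t ∈ Icc 0 T, v t ≤ G + C * ∫ s in t..T, v s := fun t ht => by
    have hgt : IntervalIntegrable g volume t T :=
      (intervalIntegrable_iff_integrableOn_Icc_of_le ht.2).2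
        (hg.mono_set (Icc_subset_Icc_left ht.1))
    calc v t ≤ ∫ s in t..T, (g s + C * v s) :=
          intervalIntegral.integral_mono_ae_restrict ht.2 hw.intervalIntegrable
            (hgt.add ((hv.intervalIntegrable _ _).const_mul C))
            (ae_restrict_of_ae_restrict_of_subset (Icc_subset_Icc_left ht.1) h')
      _ = (∫ s in t..T, g s) + C * ∫ s in t..T, v s := by
          rw [intervalIntegral.integral_add hgt ((hv.intervalIntegrable _ _).const_mul C),
            intervalIntegral.integral_const_mul]
      _ ≤ G + C * ∫ s in t..T, v s := by gcongr; exact hG t ht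
  have hv_exp := le_mul_exp_of_le_add_mul_integral hv hC hv_le
  filter_upwards [h, self_mem_ae_restrict measurableSet_Ico] with t ht htT
  have hG0 : 0 ≤ G := by simpa using hG T ⟨by linarith [htT.1, htT.2], le_rfl⟩
  calc w t ≤ g t + C * v t := ht
    _ ≤ g t + C * (G * Real.exp (C * (T - t))) := by
        gcongr; exact hv_exp t (Ico_subset_Icc_self htT)
    _ ≤ g t + C * G * Real.exp (C * T) := by
        rw [← mul_assoc]; gcongr; linarith [htT.1]

end Gronwall

section SingularWeight

variable {α t T : ℝ}

theorem integrableOn_rsub_rpow_neg (hα : α < 1) (hT : 0 ≤ T) :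
    IntegrableOn (fun s => (T - s) ^ (-α)) (Icc 0 T) := by
  rw [← intervalIntegrable_iff_integrableOn_Icc_of_le hT, ← sub_sub_cancel_left 1 α]
  exact intervalIntegrable_rsub_rpow (by linarith)

theorem integral_rsub_rpow_neg_le (hα : α < 1) (ht : t ∈ Icc 0 T) :
    ∫ s in t..T, (T - s) ^ (-α) ≤ T ^ (1 - α) / (1 - α) := by
  rw [← sub_sub_cancel_left 1 α, integral_rsub_rpow (by linarith)]
  gcongr <;> linarith [ht.1, ht.2]

end SingularWeight

theorem ae_ofReal_le_add_rlIntegral {u w g : ℝ → ℝ} {b β T : ℝ}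
    (hu : ∀ t ∈ Icc 0 T, 0 ≤ u t) (huw : u =ᵐ[volume.restrict (Icc 0 T)] w)
    (h : ∀ᵐ t ∂volume.restrict (Ico 0 T), u t ≤ g t + b * ∫ s in t..T, (s - t) ^ (β - 1) * u s) :
    ∀ᵐ t ∂volume.restrict (Ico 0 T), ENNReal.ofReal (w t) ≤
      ENNReal.ofReal (g t) +
        ENNReal.ofReal b * rlIntegral T β (fun s => ENNReal.ofReal (w s)) t := by
  filter_upwards [h, ae_restrict_of_ae_restrict_of_subset Ico_subset_Icc_self huw,
    self_mem_ae_restrict measurableSet_Ico] with t ht hut htT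
  have hsub : Ioo t T ⊆ Icc 0 T := fun s hs => ⟨htT.1.trans hs.1.le, hs.2.le⟩
  have hI : 0 ≤ ∫ s in t..T, (s - t) ^ (β - 1) * u s :=
    intervalIntegral.integral_nonneg htT.2.le fun s hs =>
      mul_nonneg (Real.rpow_nonneg (by linarith [hs.1]) _) (hu s ⟨by linarith [htT.1, hs.1], hs.2⟩)
  have hI' : ENNReal.ofReal (∫ s in t..T, (s - t) ^ (β - 1) * u s) ≤
      rlIntegral T β (fun s => ENNReal.ofReal (w s)) t := by
    -- No integrability is needed: for a non-integrable integrand the left side is `0`.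
    rw [intervalIntegral.integral_of_le htT.2.le, integral_Ioc_eq_integral_Ioo]
    refine (Real.ofReal_le_enorm _).trans ((enorm_integral_le_lintegral_enorm _).trans_eq ?_)
    refine setLIntegral_congr_fun_ae measurableSet_Ioo ?_
    filter_upwards [(ae_restrict_iff' measurableSet_Icc).1 huw] with s hs hst
    have hk : 0 ≤ (s - t) ^ (β - 1) := Real.rpow_nonneg (by linarith [hst.1]) _
    rw [Real.enorm_of_nonneg (mul_nonneg hk (hu s (hsub hst))), ENNReal.ofReal_mul hk,
      hs (hsub hst)]
  calc ENNReal.ofReal (w t) = ENNReal.ofReal (u t) := by rw [hut]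
    _ ≤ ENNReal.ofReal (g t + b * ∫ s in t..T, (s - t) ^ (β - 1) * u s) :=
        ENNReal.ofReal_le_ofReal ht
    _ ≤ ENNReal.ofReal (g t) + ENNReal.ofReal b *
          ENNReal.ofReal (∫ s in t..T, (s - t) ^ (β - 1) * u s) :=
        ENNReal.ofReal_add_le.trans_eq (by rw [ENNReal.ofReal_mul' hI])
    _ ≤ _ := by gcongr

theorem ae_le_add_mul_integral_of_ofReal_le {w g : ℝ → ℝ} {d : ℝ≥0} {γ T : ℝ} (hγ : 1 ≤ γ)
    (hw : IntegrableOn w (Icc 0 T)) (hw0 : ∀ᵐ s ∂volume.restrict (Icc 0 T), 0 ≤ w s)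
    (hg : ∀ t ∈ Ico 0 T, 0 ≤ g t)
    (h : ∀ᵐ t ∂volume.restrict (Ico 0 T), ENNReal.ofReal (w t) ≤
      ENNReal.ofReal (g t) + d * rlIntegral T γ (fun s => ENNReal.ofReal (w s)) t) :
    ∀ᵐ t ∂volume.restrict (Ico 0 T), w t ≤ g t + d * T ^ (γ - 1) * ∫ s in t..T, w s := by
  filter_upwards [h, self_mem_ae_restrict measurableSet_Ico] with t ht htT
  have hsub : Icc t T ⊆ Icc 0 T := Icc_subset_Icc_left htT.1
  have hw0' : ∀ᵐ s ∂volume.restrict (Icc t T), 0 ≤ w s :=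
    ae_restrict_of_ae_restrict_of_subset hsub hw0
  have hI : ∫⁻ s in Ioo t T, ENNReal.ofReal (w s) = ENNReal.ofReal (∫ s in t..T, w s) :=
    lintegral_Ioo_eq_ofReal_integral htT.2.le
      ((intervalIntegrable_iff_integrableOn_Icc_of_le htT.2.le).2 (hw.mono_set hsub))
      (ae_restrict_of_ae_restrict_of_subset Ioo_subset_Icc_self hw0')
  have hTγ : 0 ≤ T ^ (γ - 1) := Real.rpow_nonneg (by linarith [htT.1, htT.2]) _
  have hJ : 0 ≤ ∫ s in t..T, w s := intervalIntegral.integral_nonneg_of_ae_restrict htT.2.le hw0'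
  have hrhs : 0 ≤ g t + d * T ^ (γ - 1) * ∫ s in t..T, w s := by
    have := hg t htT; positivity
  refine (ENNReal.ofReal_le_ofReal_iff hrhs).1 (ht.trans ?_)
  calc ENNReal.ofReal (g t) + d * rlIntegral T γ (fun s => ENNReal.ofReal (w s)) t
      ≤ ENNReal.ofReal (g t) + d * (ENNReal.ofReal (T ^ (γ - 1)) *
          ∫⁻ s in Ioo t T, ENNReal.ofReal (w s)) := by
        gcongr; exact rlIntegral_le_mul_lintegral hγ htT.1
    _ = _ := by
        rw [hI, ← ENNReal.ofReal_coe_nnreal, ← ENNReal.ofReal_mul hTγ,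
          ← ENNReal.ofReal_mul d.coe_nonneg, ← mul_assoc,
          ← ENNReal.ofReal_add (hg t htT) (by positivity)]

theorem exists_ae_le_add_mul_integral {α β T : ℝ} (b : ℝ) (hα : α < 1) (hβ : 0 < β) (hT : 0 ≤ T) :
    ∃ c C : ℝ, 1 ≤ c ∧ 0 ≤ C ∧ ∀ (a : ℝ) (u w : ℝ → ℝ), 0 ≤ a → (∀ t ∈ Icc 0 T, 0 ≤ u t) →
      Measurable w → IntegrableOn w (Icc 0 T) → u =ᵐ[volume.restrict (Icc 0 T)] w →
      (∀ᵐ t ∂volume.restrict (Ico 0 T),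
        u t ≤ a * (T - t) ^ (-α) + b * ∫ s in t..T, (s - t) ^ (β - 1) * u s) →
      ∀ᵐ t ∂volume.restrict (Ico 0 T), w t ≤ a * c * (T - t) ^ (-α) + C * ∫ s in t..T, w s := by
  obtain ⟨γ, hγ, c, d, hc, hcd⟩ :=
    exists_one_le_order_ae_le_add_rlIntegral (T := T) hα hβ b.toNNReal
  refine ⟨c, d * T ^ (γ - 1), hc, by positivity, fun a u w ha hu hw_meas hw huw h => ?_⟩
  have hw0 : ∀ᵐ s ∂volume.restrict (Icc 0 T), 0 ≤ w s := by
    filter_upwards [huw, self_mem_ae_restrict measurableSet_Icc] with s hs hsT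
    exact hs ▸ hu s hsT
  have hU := hcd (ENNReal.ofReal a) _ hw_meas.ennreal_ofReal
    ((ae_ofReal_le_add_rlIntegral hu huw h).mono fun t ht => by rwa [ENNReal.ofReal_mul ha] at ht)
  refine ae_le_add_mul_integral_of_ofReal_le hγ hw hw0 (fun t ht => ?_) (hU.mono fun t ht => ?_)
  · have := sub_pos.2 ht.2
    positivity
  · rwa [← ENNReal.ofReal_coe_nnreal, ← ENNReal.ofReal_mul c.coe_nonneg,
      ← ENNReal.ofReal_mul (by positivity), mul_comm (c : ℝ) a] at ht

theorem MeasureTheory.IntegrableOn.exists_measurable_integrable_ae_eq {X : Type*}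
    [MeasurableSpace X] {μ : Measure X} {f : X → ℝ} {s : Set X} (hs : MeasurableSet s)
    (hf : IntegrableOn f s μ) : ∃ g, Measurable g ∧ Integrable g μ ∧ f =ᵐ[μ.restrict s] g := by
  refine ⟨s.indicator (hf.aestronglyMeasurable.mk f),
    hf.aestronglyMeasurable.stronglyMeasurable_mk.measurable.indicator hs,
    (integrable_indicator_iff hs).2 (hf.congr hf.aestronglyMeasurable.ae_eq_mk), ?_⟩
  filter_upwards [hf.aestronglyMeasurable.ae_eq_mk, self_mem_ae_restrict hs] with x hx hxs
  rw [indicator_of_mem hxs, hx]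

theorem one_le_rpow_mul_rpow_neg {α x T : ℝ} (hα : 0 ≤ α) (hx : 0 < x) (hxT : x ≤ T) :
    1 ≤ T ^ α * x ^ (-α) := by
  rw [Real.rpow_neg hx.le, ← div_eq_mul_inv, one_le_div (by positivity)]
  exact Real.rpow_le_rpow hx.le hxT hα

theorem backward_gronwall_weakly_singular_general
    (b α β T : ℝ) (hα0 : 0 ≤ α) (hα1 : α < 1) (hβ : 0 < β) (hT : 0 < T) :
    ∃ M : ℝ, 0 < M ∧
      ∀ (a : ℝ) (u : ℝ → ℝ), 0 ≤ a →
        IntegrableOn u (Set.Icc 0 T) →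
        (∀ t ∈ Set.Icc 0 T, 0 ≤ u t) →
        (∀ᵐ t ∂(volume.restrict (Set.Ico 0 T)),
          u t ≤ a * (T - t) ^ (-α) + b * ∫ s in t..T, (s - t) ^ (β - 1) * u s) →
        (∀ᵐ t ∂(volume.restrict (Set.Ico 0 T)),
          u t ≤ a * M * (T - t) ^ (-α)) := by
  obtain ⟨c, C, hc, hC, hreduce⟩ := exists_ae_le_add_mul_integral b hα1 hβ hT.le
  set K := T ^ (1 - α) / (1 - α)
  have hK : 0 ≤ K := by have := sub_pos.2 hα1; positivity
  refine ⟨c + C * (c * K) * Real.exp (C * T) * T ^ α, by positivity, fun a u ha hu hnn h => ?_⟩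
  obtain ⟨w, hw_meas, hw_int, huw⟩ := hu.exists_measurable_integrable_ae_eq measurableSet_Icc
  have hgr := ae_le_of_le_add_mul_integral (G := a * c * K) hC hw_int
    ((integrableOn_rsub_rpow_neg hα1 hT.le).const_mul (a * c))
    (fun t ht => by
      rw [intervalIntegral.integral_const_mul]; gcongr; exact integral_rsub_rpow_neg_le hα1 ht)
    (hreduce a u w ha hnn hw_meas hw_int.integrableOn huw h)
  filter_upwards [hgr, ae_restrict_of_ae_restrict_of_subset Ico_subset_Icc_self huw,
    self_mem_ae_restrict measurableSet_Ico] with t ht hut htT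
  have hX := one_le_rpow_mul_rpow_neg hα0 (sub_pos.2 htT.2) (sub_le_self T htT.1)
  calc u t = w t := hut
    _ ≤ a * c * (T - t) ^ (-α) + C * (a * c * K) * Real.exp (C * T) := ht
    _ ≤ a * c * (T - t) ^ (-α) + C * (a * c * K) * Real.exp (C * T) * (T ^ α * (T - t) ^ (-α)) :=
        (add_le_add_iff_left _).2 (le_mul_of_one_le_right (by positivity) hX)
    _ = a * (c + C * (c * K) * Real.exp (C * T) * T ^ α) * (T - t) ^ (-α) := by ring

/-- Backward Gronwall inequality with singular weight and weakly singular kernel. -/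
theorem backward_gronwall_weakly_singular
    (b α β T : ℝ) (hb : 0 ≤ b) (hα0 : 0 ≤ α) (hα1 : α < 1) (hβ : 0 < β) (hT : 0 < T) :
    ∃ M : ℝ, 0 < M ∧
      ∀ (a : ℝ) (u : ℝ → ℝ), 0 ≤ a →
        IntegrableOn u (Set.Icc 0 T) →
        (∀ t ∈ Set.Icc 0 T, 0 ≤ u t) →
        (∀ᵐ t ∂(volume.restrict (Set.Ico 0 T)),
          u t ≤ a * (T - t) ^ (-α) + b * ∫ s in t..T, (s - t) ^ (β - 1) * u s) →
        (∀ᵐ t ∂(volume.restrict (Set.Ico 0 T)),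
          u t ≤ a * M * (T - t) ^ (-α)) :=
  backward_gronwall_weakly_singular_general b α β T hα0 hα1 hβ hT
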